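/- Uniform stability of approximate Bayesian posteriors (stability clause of Theorem 3.9): Let μ_prior be a Borel probability measure on a separable Banach space X with finite first moment m₁ := ∫_X ‖ū‖_X dμ_prior(ū) < ∞. For every R, M > 0 there exists C = C(R, M, ρ, m₁) > 0 such that for every Borel measurable observable L : X → ℝ^d with ‖L‖_{L²(μ_prior)} ≤ M and all y, y' ∈ ℝ^d with |y|_Γ ≤ R and |y'|_Γ ≤ R: W1(μ^y, μ^{y'}) ≤ C |y − y'|_Γ. In particular, for a family of observables L^Δ with sup_Δ ‖L^Δ‖_{L²(μ_prior)} ≤ M, the posteriors μ^{Δ,y} are Lipschitz in the measurement y uniformly in Δ. -/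

import Mathlib

/-!
The posterior density `ρ(y − L u) / Z(y)` is Lipschitz in `y`, uniformly in `u`: numerator and
evidence `Z(y)` are Lipschitz by (N.1), and `Z(y)` is bounded below on `|y|_Γ ≤ R`, uniformly over
observables with `‖L‖_{L²} ≤ M`, by the Gaussian tail (N.3) and Jensen's inequality
`∫ exp (−|L|²_Γ) ≥ exp (−‖L‖²_{L²})`. An admissible test function satisfies `|Φ u| ≤ ‖u‖`, so
integrating it against the difference of the two densities bounds `W1` by that Lipschitz constant
times the first moment of the prior.
-/

open MeasureTheory
open scoped BigOperators ENNReal Matrix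

noncomputable section

/-- The Γ-weighted norm `|y|_Γ = sqrt ⟨y, Γ⁻¹ y⟩` on `ℝ^d`. -/
def gammaNorm {d : ℕ} (Γ : Matrix (Fin d) (Fin d) ℝ) (y : Fin d → ℝ) : ℝ :=
  Real.sqrt (y ⬝ᵥ (Γ⁻¹).mulVec y)

/-- A noise density satisfying (N.1)–(N.3). -/
structure IsNoiseDensity {d : ℕ} (Γ : Matrix (Fin d) (Fin d) ℝ) (ρ : (Fin d → ℝ) → ℝ)
    (Lρ Cb Ct : ℝ) : Prop where
  Lρ_pos : 0 < Lρ
  Cb_pos : 0 < Cb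
  Ct_pos : 0 < Ct
  pos : ∀ y, 0 < ρ y
  lip : ∀ y y', |ρ y - ρ y'| ≤ Lρ * gammaNorm Γ (y - y')
  bdd : ∀ y, ρ y ≤ Cb
  tail : ∀ y, Ct⁻¹ * Real.exp (-(1 / 2) * (gammaNorm Γ y) ^ 2) ≤ ρ y

/-- Wasserstein-1 distance in Kantorovich–Rubinstein dual form. -/
def W1 {X : Type*} [NormedAddCommGroup X] [MeasurableSpace X] (μ ν : Measure X) : ℝ :=
  sSup {r : ℝ | ∃ Φ : X → ℝ, LipschitzWith 1 Φ ∧ Φ 0 = 0 ∧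
    r = (∫ u, Φ u ∂μ) - ∫ u, Φ u ∂ν}

/-- Normalization constant `Z(y) = ∫ ρ(y − L(ū)) dμ_prior(ū)`. -/
def bayesZ {X : Type*} [MeasurableSpace X] {d : ℕ} (μp : Measure X)
    (ρ : (Fin d → ℝ) → ℝ) (L : X → Fin d → ℝ) (y : Fin d → ℝ) : ℝ :=
  ∫ u, ρ (y - L u) ∂μp

/-- The Bayesian posterior `μ^y = Z(y)⁻¹ ρ(y − L(·)) · μ_prior`. -/
def bayesPosterior {X : Type*} [MeasurableSpace X] {d : ℕ} (μp : Measure X)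
    (ρ : (Fin d → ℝ) → ℝ) (L : X → Fin d → ℝ) (y : Fin d → ℝ) : Measure X :=
  μp.withDensity fun u => ENNReal.ofReal (ρ (y - L u) / bayesZ μp ρ L y)

section GammaNorm

variable {d : ℕ} {Γ : Matrix (Fin d) (Fin d) ℝ}

theorem gammaNorm_nonneg (v : Fin d → ℝ) : 0 ≤ gammaNorm Γ v := Real.sqrt_nonneg _

@[simp]
theorem gammaNorm_zero : gammaNorm Γ 0 = 0 := by
  simp [gammaNorm]

@[fun_prop]
theorem continuous_gammaNorm : Continuous (gammaNorm Γ) :=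
  Real.continuous_sqrt.comp
    (continuous_id.dotProduct (continuous_const.matrix_mulVec continuous_id))

theorem gammaNorm_eq_norm (hΓ : Γ.PosDef) (v : Fin d → ℝ) :
    gammaNorm Γ v = @norm _ (Matrix.toNormedAddCommGroup _ hΓ.inv).toNorm v := by
  rw [@norm_eq_sqrt_real_inner _ (Matrix.toNormedAddCommGroup _ hΓ.inv).toSeminormedAddCommGroup
    (Matrix.toInnerProductSpace _ hΓ.inv.posSemidef) v]
  exact congrArg Real.sqrt (dotProduct_comm _ _)

theorem gammaNorm_sub_le (hΓ : Γ.PosDef) (a b : Fin d → ℝ) :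
    gammaNorm Γ (a - b) ≤ gammaNorm Γ a + gammaNorm Γ b := by
  simp only [gammaNorm_eq_norm hΓ]
  exact @norm_sub_le _
    (Matrix.toNormedAddCommGroup _ hΓ.inv).toSeminormedAddCommGroup.toSeminormedAddGroup a b

theorem gammaNorm_sub_sq_le (hΓ : Γ.PosDef) (a b : Fin d → ℝ) :
    gammaNorm Γ (a - b) ^ 2 ≤ 2 * (gammaNorm Γ a ^ 2 + gammaNorm Γ b ^ 2) := by
  have h := pow_le_pow_left₀ (gammaNorm_nonneg _) (gammaNorm_sub_le hΓ a b) 2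
  nlinarith [sq_nonneg (gammaNorm Γ a - gammaNorm Γ b)]

end GammaNorm

theorem abs_div_sub_div_le {a b Z Z' z B ε : ℝ} (hz : 0 < z) (hZ : z ≤ Z) (hZ' : z ≤ Z')
    (hb₀ : 0 ≤ b) (hb : b ≤ B) (hab : |a - b| ≤ ε) (hZZ' : |Z - Z'| ≤ ε) :
    |a / Z - b / Z'| ≤ (1 / z + B / z ^ 2) * ε := by
  have hZpos : 0 < Z := hz.trans_le hZ
  have hZ'pos : 0 < Z' := hz.trans_le hZ'
  have hε : 0 ≤ ε := (abs_nonneg _).trans hab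
  have hsplit : a / Z - b / Z' = (a - b) / Z + b * (Z' - Z) / (Z * Z') := by
    field_simp
    ring
  have h₁ : |(a - b) / Z| ≤ ε / z := by
    rw [abs_div, abs_of_pos hZpos]
    exact div_le_div₀ hε hab hz hZ
  have h₂ : |b * (Z' - Z) / (Z * Z')| ≤ B * ε / z ^ 2 := by
    rw [abs_div, abs_mul, abs_of_nonneg hb₀, abs_of_pos (mul_pos hZpos hZ'pos), abs_sub_comm, sq]
    exact div_le_div₀ (mul_nonneg (hb₀.trans hb) hε)
      (mul_le_mul hb hZZ' (abs_nonneg _) (hb₀.trans hb)) (by positivity)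
      (mul_le_mul hZ hZ' hz.le hZpos.le)
  calc |a / Z - b / Z'| ≤ ε / z + B * ε / z ^ 2 := by
        rw [hsplit]; exact (abs_add_le _ _).trans (add_le_add h₁ h₂)
    _ = (1 / z + B / z ^ 2) * ε := by ring

theorem integral_withDensity_ofReal {X : Type*} [MeasurableSpace X] {μ : Measure X}
    {f : X → ℝ} (hf : Measurable f) (hf₀ : 0 ≤ f) (Φ : X → ℝ) :
    ∫ u, Φ u ∂μ.withDensity (fun u => ENNReal.ofReal (f u)) = ∫ u, f u * Φ u ∂μ := by
  rw [integral_withDensity_eq_integral_toReal_smul hf.ennreal_ofReal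
    (ae_of_all _ fun _ => ENNReal.ofReal_lt_top)]
  simp only [ENNReal.toReal_ofReal (hf₀ _), smul_eq_mul]

section WithDensity

variable {X : Type*} [NormedAddCommGroup X] [MeasurableSpace X] [OpensMeasurableSpace X]
  {μ : Measure X}

theorem integrable_mul_of_lipschitzWith {f : X → ℝ} {B : ℝ} (hf : Measurable f)
    (hf₀ : 0 ≤ f) (hfB : ∀ u, f u ≤ B) (hmom : Integrable (fun u => ‖u‖) μ) {Φ : X → ℝ}
    (hΦ : LipschitzWith 1 Φ) (hΦ₀ : Φ 0 = 0) :
    Integrable (fun u => f u * Φ u) μ := by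
  refine (hmom.const_mul B).mono' (hf.mul hΦ.continuous.measurable).aestronglyMeasurable
    (ae_of_all _ fun u => ?_)
  rw [norm_mul, Real.norm_of_nonneg (hf₀ u)]
  exact mul_le_mul (hfB u) (by simpa using hΦ.norm_le_mul hΦ₀ u) (norm_nonneg _)
    ((hf₀ u).trans (hfB u))

theorem W1_withDensity_le {f g : X → ℝ} {B ε : ℝ} (hf : Measurable f) (hg : Measurable g)
    (hf₀ : 0 ≤ f) (hg₀ : 0 ≤ g) (hfB : ∀ u, f u ≤ B) (hgB : ∀ u, g u ≤ B)
    (hfg : ∀ u, |f u - g u| ≤ ε) (hmom : Integrable (fun u => ‖u‖) μ) :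
    W1 (μ.withDensity fun u => ENNReal.ofReal (f u))
        (μ.withDensity fun u => ENNReal.ofReal (g u)) ≤ ε * ∫ u, ‖u‖ ∂μ := by
  have hε : 0 ≤ ε := (abs_nonneg _).trans (hfg 0)
  refine Real.sSup_le ?_ (mul_nonneg hε (integral_nonneg fun _ => norm_nonneg _))
  rintro r ⟨Φ, hΦ, hΦ₀, rfl⟩
  have hfΦ := integrable_mul_of_lipschitzWith hf hf₀ hfB hmom hΦ hΦ₀
  have hgΦ := integrable_mul_of_lipschitzWith hg hg₀ hgB hmom hΦ hΦ₀
  rw [integral_withDensity_ofReal hf hf₀, integral_withDensity_ofReal hg hg₀,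
    ← integral_sub hfΦ hgΦ, ← integral_const_mul]
  refine integral_mono (hfΦ.sub hgΦ) (hmom.const_mul ε) fun u => ?_
  have hΦu : |Φ u| ≤ ‖u‖ := by simpa using hΦ.norm_le_mul hΦ₀ u
  calc f u * Φ u - g u * Φ u ≤ |f u - g u| * |Φ u| := by
        rw [← sub_mul, ← abs_mul]; exact le_abs_self _
    _ ≤ ε * ‖u‖ := mul_le_mul (hfg u) hΦu (abs_nonneg _) hε

end WithDensity

namespace IsNoiseDensity

open Real

variable {d : ℕ} {Γ : Matrix (Fin d) (Fin d) ℝ} {ρ : (Fin d → ℝ) → ℝ} {Lρ Cb Ct : ℝ}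
  {X : Type*} [MeasurableSpace X] {μ : Measure X} [IsProbabilityMeasure μ] {L : X → Fin d → ℝ}

theorem continuous (hρ : IsNoiseDensity Γ ρ Lρ Cb Ct) : Continuous ρ := by
  refine continuous_iff_continuousAt.2 fun x => tendsto_iff_dist_tendsto_zero.2 ?_
  have h : Filter.Tendsto (fun w => Lρ * gammaNorm Γ (w - x)) (nhds x) (nhds 0) := by
    have hc : Continuous fun w => Lρ * gammaNorm Γ (w - x) := by fun_prop
    simpa using hc.tendsto x
  exact squeeze_zero (fun _ => dist_nonneg) (fun w => (hρ.lip w x).trans_eq' (Real.dist_eq _ _)) h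

theorem abs_sub_sub_le (hρ : IsNoiseDensity Γ ρ Lρ Cb Ct) (y y' v : Fin d → ℝ) :
    |ρ (y - v) - ρ (y' - v)| ≤ Lρ * gammaNorm Γ (y - y') := by
  simpa only [sub_sub_sub_cancel_right] using hρ.lip (y - v) (y' - v)

theorem measurable_comp_sub (hρ : IsNoiseDensity Γ ρ Lρ Cb Ct) (hL : Measurable L)
    (y : Fin d → ℝ) : Measurable fun u => ρ (y - L u) :=
  hρ.continuous.measurable.comp (measurable_const.sub hL)

theorem integrable_comp_sub (hρ : IsNoiseDensity Γ ρ Lρ Cb Ct) (hL : Measurable L)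
    (y : Fin d → ℝ) : Integrable (fun u => ρ (y - L u)) μ :=
  (integrable_const Cb).mono' (hρ.measurable_comp_sub hL y).aestronglyMeasurable
    (ae_of_all _ fun _ => (Real.norm_of_nonneg (hρ.pos _).le).trans_le (hρ.bdd _))

theorem abs_bayesZ_sub_le (hρ : IsNoiseDensity Γ ρ Lρ Cb Ct) (hL : Measurable L)
    (y y' : Fin d → ℝ) :
    |bayesZ μ ρ L y - bayesZ μ ρ L y'| ≤ Lρ * gammaNorm Γ (y - y') := by
  rw [bayesZ, bayesZ,
    ← integral_sub (hρ.integrable_comp_sub hL y) (hρ.integrable_comp_sub hL y')]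
  calc |∫ u, (ρ (y - L u) - ρ (y' - L u)) ∂μ| ≤ ∫ u, |ρ (y - L u) - ρ (y' - L u)| ∂μ :=
        abs_integral_le_integral_abs
    _ ≤ ∫ _, Lρ * gammaNorm Γ (y - y') ∂μ :=
        integral_mono ((hρ.integrable_comp_sub hL y).sub (hρ.integrable_comp_sub hL y')).abs
          (integrable_const _) fun u => hρ.abs_sub_sub_le y y' (L u)
    _ = Lρ * gammaNorm Γ (y - y') := by simp

theorem bayesZ_ge (hΓ : Γ.PosDef) (hρ : IsNoiseDensity Γ ρ Lρ Cb Ct) (hL : Measurable L)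
    (hL2 : Integrable (fun u => gammaNorm Γ (L u) ^ 2) μ) (w : Fin d → ℝ) :
    Ct⁻¹ * exp (-(gammaNorm Γ w ^ 2 + ∫ u, gammaNorm Γ (L u) ^ 2 ∂μ)) ≤ bayesZ μ ρ L w := by
  have hCt := inv_pos.2 hρ.Ct_pos
  set q := fun u => gammaNorm Γ (L u) ^ 2
  have hq : Measurable q := (continuous_gammaNorm.measurable.comp hL).pow_const 2
  have hexp : Integrable (fun u => exp (-q u)) μ :=
    (integrable_const 1).mono' (measurable_exp.comp hq.neg).aestronglyMeasurable
      (ae_of_all _ fun u => by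
        rw [Real.norm_of_nonneg (exp_pos _).le, exp_le_one_iff, neg_nonpos]; positivity)
  have jensen : exp (∫ u, -q u ∂μ) ≤ ∫ u, exp (-q u) ∂μ :=
    convexOn_exp.map_integral_le continuousOn_exp isClosed_univ
      (ae_of_all _ fun _ => Set.mem_univ _) hL2.neg hexp
  have hpt : ∀ u, Ct⁻¹ * exp (-gammaNorm Γ w ^ 2) * exp (-q u) ≤ ρ (w - L u) := fun u => by
    refine le_trans ?_ (hρ.tail (w - L u))
    rw [mul_assoc, ← exp_add]
    gcongr
    linarith [gammaNorm_sub_sq_le hΓ w (L u)]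
  calc Ct⁻¹ * exp (-(gammaNorm Γ w ^ 2 + ∫ u, q u ∂μ))
      = Ct⁻¹ * exp (-gammaNorm Γ w ^ 2) * exp (∫ u, -q u ∂μ) := by
        rw [integral_neg, mul_assoc, ← exp_add, neg_add]
    _ ≤ Ct⁻¹ * exp (-gammaNorm Γ w ^ 2) * ∫ u, exp (-q u) ∂μ := by gcongr
    _ = ∫ u, Ct⁻¹ * exp (-gammaNorm Γ w ^ 2) * exp (-q u) ∂μ := (integral_const_mul _ _).symm
    _ ≤ bayesZ μ ρ L w := integral_mono (hexp.const_mul _) (hρ.integrable_comp_sub hL w) hpt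

theorem bayesZ_ge_of_le (hΓ : Γ.PosDef) (hρ : IsNoiseDensity Γ ρ Lρ Cb Ct) (hL : Measurable L)
    (hL2 : Integrable (fun u => gammaNorm Γ (L u) ^ 2) μ) {R M : ℝ} (hM : 0 ≤ M)
    (hLM : √(∫ u, gammaNorm Γ (L u) ^ 2 ∂μ) ≤ M) {w : Fin d → ℝ} (hw : gammaNorm Γ w ≤ R) :
    Ct⁻¹ * exp (-(R ^ 2 + M ^ 2)) ≤ bayesZ μ ρ L w := by
  refine le_trans ?_ (hρ.bayesZ_ge hΓ hL hL2 w)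
  have hLM' := (Real.sqrt_le_left hM).1 hLM
  have hCt := inv_pos.2 hρ.Ct_pos
  have hw₀ := gammaNorm_nonneg (Γ := Γ) w
  gcongr

end IsNoiseDensity

theorem bip_uniform_stability_general
    {X : Type*} [NormedAddCommGroup X]
    [MeasurableSpace X] [BorelSpace X]
    {d : ℕ}
    (Γ : Matrix (Fin d) (Fin d) ℝ) (hΓ : Γ.PosDef)
    (ρ : (Fin d → ℝ) → ℝ) (Lρ Cb Ct : ℝ) (hρ : IsNoiseDensity Γ ρ Lρ Cb Ct)
    (μp : Measure X) [IsProbabilityMeasure μp]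
    (hmom : Integrable (fun u => ‖u‖) μp) :
    ∀ R > 0, ∀ M > 0, ∃ C > 0,
      ∀ L : X → Fin d → ℝ, Measurable L →
        Integrable (fun u => (gammaNorm Γ (L u)) ^ 2) μp →
        Real.sqrt (∫ u, (gammaNorm Γ (L u)) ^ 2 ∂μp) ≤ M →
      ∀ y y' : Fin d → ℝ, gammaNorm Γ y ≤ R → gammaNorm Γ y' ≤ R →
        W1 (bayesPosterior μp ρ L y) (bayesPosterior μp ρ L y')
          ≤ C * gammaNorm Γ (y - y') := by
  intro R _ M hM
  set z := Ct⁻¹ * Real.exp (-(R ^ 2 + M ^ 2))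
  have hz : 0 < z := mul_pos (inv_pos.2 hρ.Ct_pos) (Real.exp_pos _)
  have hm₁ : 0 ≤ ∫ u, ‖u‖ ∂μp := integral_nonneg fun _ => norm_nonneg _
  have hCb := hρ.Cb_pos
  refine ⟨Lρ * (1 / z + Cb / z ^ 2) * ((∫ u, ‖u‖ ∂μp) + 1),
    mul_pos (mul_pos hρ.Lρ_pos (by positivity)) (by linarith), ?_⟩
  intro L hL hL2 hLM y y' hy hy'
  have hZ : ∀ w, gammaNorm Γ w ≤ R → z ≤ bayesZ μp ρ L w :=
    fun _ hw => hρ.bayesZ_ge_of_le hΓ hL hL2 hM.le hLM hw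
  have hdens_nonneg : ∀ w, 0 ≤ fun u => ρ (w - L u) / bayesZ μp ρ L w :=
    fun w u => div_nonneg (hρ.pos _).le (integral_nonneg fun _ => (hρ.pos _).le)
  have hdens_le : ∀ w, gammaNorm Γ w ≤ R → ∀ u, ρ (w - L u) / bayesZ μp ρ L w ≤ Cb / z :=
    fun w hw u => div_le_div₀ hCb.le (hρ.bdd _) hz (hZ w hw)
  calc W1 (bayesPosterior μp ρ L y) (bayesPosterior μp ρ L y')
      ≤ (1 / z + Cb / z ^ 2) * (Lρ * gammaNorm Γ (y - y')) * ∫ u, ‖u‖ ∂μp :=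
        W1_withDensity_le ((hρ.measurable_comp_sub hL y).div_const _)
          ((hρ.measurable_comp_sub hL y').div_const _) (hdens_nonneg y) (hdens_nonneg y')
          (hdens_le y hy) (hdens_le y' hy')
          (fun u => abs_div_sub_div_le hz (hZ y hy) (hZ y' hy') (hρ.pos _).le (hρ.bdd _)
            (hρ.abs_sub_sub_le y y' (L u)) (hρ.abs_bayesZ_sub_le hL y y')) hmom
    _ = Lρ * (1 / z + Cb / z ^ 2) * (∫ u, ‖u‖ ∂μp) * gammaNorm Γ (y - y') := by ring
    _ ≤ Lρ * (1 / z + Cb / z ^ 2) * ((∫ u, ‖u‖ ∂μp) + 1) * gammaNorm Γ (y - y') := by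
        have hLρ := hρ.Lρ_pos
        have hD := gammaNorm_nonneg (Γ := Γ) (y - y')
        gcongr
        linarith

/-- **Theorem 3.9, stability clause: uniform Lipschitz stability of Bayesian
posteriors in the measurement, with constant depending only on `R`, `M`, `ρ`
and the first moment of the prior (in particular uniform in the observable,
hence in the discretization parameter Δ).** -/
theorem bip_uniform_stability
    {X : Type*} [NormedAddCommGroup X] [NormedSpace ℝ X] [CompleteSpace X]
    [TopologicalSpace.SeparableSpace X] [MeasurableSpace X] [BorelSpace X]
    {d : ℕ}
    (Γ : Matrix (Fin d) (Fin d) ℝ) (hΓ : Γ.PosDef)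
    (ρ : (Fin d → ℝ) → ℝ) (Lρ Cb Ct : ℝ) (hρ : IsNoiseDensity Γ ρ Lρ Cb Ct)
    (μp : Measure X) [IsProbabilityMeasure μp]
    (hmom : Integrable (fun u => ‖u‖) μp) :
    ∀ R > 0, ∀ M > 0, ∃ C > 0,
      ∀ L : X → Fin d → ℝ, Measurable L →
        Integrable (fun u => (gammaNorm Γ (L u)) ^ 2) μp →
        Real.sqrt (∫ u, (gammaNorm Γ (L u)) ^ 2 ∂μp) ≤ M →
      ∀ y y' : Fin d → ℝ, gammaNorm Γ y ≤ R → gammaNorm Γ y' ≤ R →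
        W1 (bayesPosterior μp ρ L y) (bayesPosterior μp ρ L y')
          ≤ C * gammaNorm Γ (y - y') :=
  bip_uniform_stability_general Γ hΓ ρ Lρ Cb Ct hρ μp hmom
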